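/- arXiv:2201.08288 — 2 statements merged into one kernel-verified Lean document; each statement's English description precedes it below -/
import Mathlib

section
/- Let a ∈ [0,1), b ∈ (0,1] with a < b, and let δ ∈ (0,1). Then the sequence of partial sums 1_J(x,a,b) = Σ_{j=0}^{2J} c_j(x)·g_j(a,b), J = 0,1,2,…, converges uniformly to 𝟙(a < x < b) for x ranging over the set U_{δ,(a,b)} = (0,1) with the interval (a−δ, a+δ) removed when a > 0 and the interval (b−δ, b+δ) removed when b < 1. -/
/-- `cfun j x`: c₀(x)=1, c_{2j-1}(x)=cos((2j-1)x), c_{2j}(x)=sin((2j-1)x). -/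
noncomputable def cfun (j : ℕ) (x : ℝ) : ℝ :=
  if j = 0 then 1
  else if j % 2 = 1 then Real.cos ((j : ℝ) * x)
  else Real.sin (((j : ℝ) - 1) * x)

/-- `gfun j a b`: the coefficients g_j(a,b). -/
noncomputable def gfun (j : ℕ) (a b : ℝ) : ℝ :=
  if j = 0 then
    1 - (1 / 2) * ((if 0 < a then (1 : ℝ) else 0) + (if b < 1 then (1 : ℝ) else 0))
  else if j % 2 = 1 then
    (2 / (Real.pi * (j : ℝ))) *
      ((if b < 1 then (1 : ℝ) else 0) * Real.sin ((j : ℝ) * b) -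
        (if 0 < a then (1 : ℝ) else 0) * Real.sin ((j : ℝ) * a))
  else
    (2 / (Real.pi * ((j : ℝ) - 1))) *
      ((if 0 < a then (1 : ℝ) else 0) * Real.cos (((j : ℝ) - 1) * a) -
        (if b < 1 then (1 : ℝ) else 0) * Real.cos (((j : ℝ) - 1) * b))

/-- Indicator of the open interval (a,b). -/
noncomputable def indIoo (a b x : ℝ) : ℝ := if a < x ∧ x < b then 1 else 0

/-- The Jth partial sum 1_J(x,a,b) = Σ_{j=0}^{2J} c_j(x)·g_j(a,b). -/
noncomputable def oneJ (J : ℕ) (x a b : ℝ) : ℝ :=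
  ∑ j ∈ Finset.range (2 * J + 1), cfun j x * gfun j a b

/-- The set U_{δ,(a,b)}: (0,1) with (a-δ,a+δ) removed when a>0 and (b-δ,b+δ) removed when b<1. -/
def Uset (δ a b : ℝ) : Set ℝ :=
  {x | x ∈ Set.Ioo (0 : ℝ) 1 ∧ (0 < a → x ∉ Set.Ioo (a - δ) (a + δ)) ∧
    (b < 1 → x ∉ Set.Ioo (b - δ) (b + δ))}

/-!
Pairing the terms of index `2j+1` and `2j+2` gives
`1_J(x,a,b) = g₀(a,b) + (2/π)(𝟙(b<1) S_J(b-x) - 𝟙(a>0) S_J(a-x))`, where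
`S_J(t) = ∑_{j<J} sin((2j+1)t)/(2j+1)` is a partial sum of the Fourier series of the square wave
`sign(t) π/4`; replacing `S_J` by that square wave turns the right-hand side into `𝟙(a<x<b)`.
Summation by parts against the bounded sums `∑_{j<n} sin((2j+1)t) = sin²(nt)/sin t` gives
`|S_J(t) - sign(t) π/4| ≤ 2/(sin δ (2J+1))` whenever `δ ≤ |t| ≤ π/2`, which covers `t = a-x` and
`t = b-x` for `x ∈ U_{δ,(a,b)}`. The value `π/4` of the limit comes from Abel's limit theorem:
`∑_{n odd} sin(nt) rⁿ/n = (arg(1 + r e^{it}) - arg(1 - r e^{it}))/2`, which tends to `π/4` as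
`r → 1⁻`.
-/

open Real Filter Finset Topology

theorem abs_sum_Ico_mul_le_of_antitone {b f : ℕ → ℝ} {M : ℝ} (hb : Antitone b)
    (hb0 : ∀ i, 0 ≤ b i) (hf : ∀ n, |∑ i ∈ range n, f i| ≤ M) {m n : ℕ} (hmn : m ≤ n) :
    |∑ i ∈ Ico m n, b i * f i| ≤ 2 * M * b m := by
  have hM : 0 ≤ M := (abs_nonneg _).trans (hf 0)
  rcases hmn.eq_or_lt with rfl | hlt
  · simpa using mul_nonneg (mul_nonneg zero_le_two hM) (hb0 m)
  have hstep (i : ℕ) :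
      |(b (i + 1) - b i) * ∑ k ∈ range (i + 1), f k| ≤ (b i - b (i + 1)) * M := by
    rw [abs_mul, abs_sub_comm, abs_of_nonneg (sub_nonneg.2 (hb i.le_succ))]
    exact mul_le_mul_of_nonneg_left (hf _) (sub_nonneg.2 (hb i.le_succ))
  have htele : ∑ i ∈ Ico m (n - 1), (b i - b (i + 1)) = b m - b (n - 1) := by
    rw [← neg_sub (b (n - 1)), ← sum_Ico_sub b (by omega), ← sum_neg_distrib]
    simp
  simp only [← smul_eq_mul, sum_Ico_by_parts b f hlt]
  simp only [smul_eq_mul]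
  calc _ ≤ |b (n - 1) * ∑ k ∈ range n, f k| + |b m * ∑ k ∈ range m, f k|
        + ∑ i ∈ Ico m (n - 1), |(b (i + 1) - b i) * ∑ k ∈ range (i + 1), f k| :=
        (abs_sub _ _).trans (add_le_add (abs_sub _ _) (abs_sum_le_sum_abs _ _))
    _ ≤ b (n - 1) * M + b m * M + ∑ i ∈ Ico m (n - 1), (b i - b (i + 1)) * M := by
        rw [abs_mul, abs_mul, abs_of_nonneg (hb0 _), abs_of_nonneg (hb0 _)]
        exact add_le_add (add_le_add (mul_le_mul_of_nonneg_left (hf n) (hb0 _))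
          (mul_le_mul_of_nonneg_left (hf m) (hb0 _))) (sum_le_sum fun i _ => hstep i)
    _ = 2 * M * b m := by rw [← sum_mul, htele]; ring

theorem sum_range_ite_odd {M : Type*} [AddCommMonoid M] (f : ℕ → M) (N : ℕ) :
    ∑ n ∈ range N, (if Odd n then f n else 0) = ∑ k ∈ range (N / 2), f (2 * k + 1) := by
  have hev (K : ℕ) : ∑ n ∈ range (2 * K), (if Odd n then f n else 0) =
      ∑ k ∈ range K, f (2 * k + 1) := by
    induction K with
    | zero => simp
    | succ K ih => simp [mul_add, sum_range_succ, ih, Nat.not_odd_iff_even.2 (even_two_mul K)]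
  obtain ⟨K, rfl | rfl⟩ := Nat.even_or_odd' N
  · rw [hev, Nat.mul_div_cancel_left _ two_pos]
  · rw [sum_range_succ, hev, if_neg (by simp), add_zero, show (2 * K + 1) / 2 = K by omega]

theorem tendsto_const_div_two_mul_add_one (C : ℝ) :
    Tendsto (fun n : ℕ => C / (2 * n + 1)) atTop (𝓝 0) :=
  tendsto_const_nhds.div_atTop <| tendsto_atTop_add_const_right _ _ <|
    tendsto_natCast_atTop_atTop.const_mul_atTop two_pos

theorem tendstoUniformlyOn_of_forall_dist_le {ι α β : Type*} [PseudoMetricSpace β]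
    {F : ι → α → β} {f : α → β} {p : Filter ι} {s : Set α} {u : ι → ℝ}
    (hu : Tendsto u p (𝓝 0)) (h : ∀ i, ∀ x ∈ s, dist (f x) (F i x) ≤ u i) :
    TendstoUniformlyOn F f p s :=
  Metric.tendstoUniformlyOn_iff.2 fun _ hε =>
    (hu.eventually (gt_mem_nhds hε)).mono fun i hi x hx => (h i x hx).trans_lt hi

namespace Complex

theorem arg_one_add_exp_mul_I {t : ℝ} (ht0 : 0 < t) (htπ : t < π) :
    arg (1 + exp (t * I)) = t / 2 := by
  have h : 1 + exp (t * I) =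
      (2 * Real.cos (t / 2) : ℝ) * (cos (t / 2 : ℝ) + sin (t / 2 : ℝ) * I) := by
    rw [← exp_mul_I]
    push_cast
    rw [two_cos, add_mul, ← exp_add, ← exp_add]
    ring_nf
    simp [add_comm]
  rw [h, arg_mul_cos_add_sin_mul_I]
  · exact mul_pos two_pos (Real.cos_pos_of_mem_Ioo ⟨by linarith, by linarith⟩)
  · constructor <;> linarith

theorem arg_one_sub_exp_mul_I {t : ℝ} (ht0 : 0 < t) (htπ : t < π) :
    arg (1 - exp (t * I)) = t / 2 - π / 2 := by
  have h : 1 - exp (t * I) =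
      (2 * Real.sin (t / 2) : ℝ) * (cos (t / 2 - π / 2 : ℝ) + sin (t / 2 - π / 2 : ℝ) * I) := by
    rw [← exp_mul_I]
    push_cast
    rw [two_sin, sub_mul _ (π / 2 : ℂ), exp_sub, exp_pi_div_two_mul_I, mul_assoc,
      mul_div_cancel₀ _ I_ne_zero, sub_mul, ← exp_add, ← exp_add]
    ring_nf
    simp only [exp_zero]
    ring
  rw [h, arg_mul_cos_add_sin_mul_I]
  · exact mul_pos two_pos (Real.sin_pos_of_pos_of_lt_pi (by linarith) (by linarith))
  · constructor <;> linarith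

theorem hasSum_ite_odd_sin_div_mul_pow (t : ℝ) {r : ℝ} (hr : |r| < 1) :
    HasSum (fun n : ℕ => (if Odd n then Real.sin (n * t) / n else 0) * r ^ n)
      ((arg (1 + r * exp (t * I)) - arg (1 - r * exp (t * I))) / 2) := by
  set z : ℂ := r * exp (t * I)
  have hz : ‖z‖ < 1 := by simpa [z, norm_exp_ofReal_mul_I] using hr
  have h := hasSum_im (((hasSum_taylorSeries_neg_log hz).sub
    (hasSum_taylorSeries_neg_log (z := -z) (by rwa [norm_neg]))).div_const 2)
  rw [sub_neg_eq_add] at h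
  convert h using 1
  · ext n
    have hzn : z ^ n / n = ((r ^ n / n : ℝ) : ℂ) * exp ((n * t : ℝ) * I) := by
      simp only [z, mul_pow, ← Complex.exp_nat_mul]
      push_cast
      ring_nf
    rcases Nat.even_or_odd n with hn | hn
    · simp [hn.neg_pow, Nat.not_odd_iff_even.2 hn]
    · rw [hn.neg_pow, neg_div, sub_neg_eq_add, ← two_mul, mul_div_cancel_left₀ _ two_ne_zero, hzn,
        im_ofReal_mul, exp_ofReal_mul_I_im, if_pos hn]
      ring
  · simp only [div_ofNat_im, add_im, neg_im, log_im, sub_neg_eq_add]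
    ring

theorem tendsto_arg_one_add_sub_arg_one_sub {t : ℝ} (ht0 : 0 < t) (htπ : t < π) :
    Tendsto (fun r : ℝ => (arg (1 + r * exp (t * I)) - arg (1 - r * exp (t * I))) / 2)
      (𝓝[<] 1) (𝓝 (π / 4)) := by
  have hsin : Real.sin t ≠ 0 := (Real.sin_pos_of_pos_of_lt_pi ht0 htπ).ne'
  have hadd : ContinuousAt (fun r : ℝ => arg (1 + r * exp (t * I))) 1 :=
    (continuousAt_arg (mem_slitPlane_iff.2 (Or.inr (by simpa using hsin)))).comp (by fun_prop)
  have hsub : ContinuousAt (fun r : ℝ => arg (1 - r * exp (t * I))) 1 :=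
    (continuousAt_arg (mem_slitPlane_iff.2 (Or.inr (by simpa using hsin)))).comp (by fun_prop)
  have hlim := ((hadd.sub hsub).div_const 2).tendsto.mono_left (nhdsWithin_le_nhds (s := Set.Iio 1))
  simp only [Pi.sub_apply, ofReal_one, one_mul, arg_one_add_exp_mul_I ht0 htπ,
    arg_one_sub_exp_mul_I ht0 htπ] at hlim
  convert hlim using 2
  ring

end Complex

noncomputable def squareWaveSum (J : ℕ) (t : ℝ) : ℝ :=
  ∑ j ∈ range J, sin ((2 * j + 1) * t) / (2 * j + 1)

theorem squareWaveSum_neg (J : ℕ) (t : ℝ) : squareWaveSum J (-t) = -squareWaveSum J t := by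
  simp [squareWaveSum, neg_div]

theorem squareWaveSum_succ (J : ℕ) (t : ℝ) :
    squareWaveSum (J + 1) t = squareWaveSum J t + sin ((2 * J + 1) * t) / (2 * J + 1) :=
  sum_range_succ _ _

theorem sin_two_mul_add_one_mul_mul_sin (c t : ℝ) :
    sin ((2 * c + 1) * t) * sin t = sin ((c + 1) * t) ^ 2 - sin (c * t) ^ 2 := by
  rw [show (2 * c + 1) * t = c * t + (c * t + t) by ring, show (c + 1) * t = c * t + t by ring,
    sin_add (c * t), sin_add, cos_add]
  nlinarith [sin_sq_add_cos_sq (c * t), sin_sq_add_cos_sq t]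

theorem sum_range_sin_odd_mul_mul_sin (n : ℕ) (t : ℝ) :
    (∑ j ∈ range n, sin ((2 * j + 1) * t)) * sin t = sin (n * t) ^ 2 := by
  induction n with
  | zero => simp
  | succ n ih => rw [sum_range_succ, add_mul, ih, sin_two_mul_add_one_mul_mul_sin]; push_cast; ring

theorem abs_sum_range_sin_odd_mul_le {t : ℝ} (ht : 0 < sin t) (n : ℕ) :
    |∑ j ∈ range n, sin ((2 * j + 1) * t)| ≤ 1 / sin t := by
  rw [le_div_iff₀ ht, ← abs_of_pos ht, ← abs_mul, sum_range_sin_odd_mul_mul_sin,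
    abs_of_nonneg (sq_nonneg _)]
  exact sin_sq_le_one _

theorem abs_squareWaveSum_sub_le {t : ℝ} (ht : 0 < sin t) {m n : ℕ} (hmn : m ≤ n) :
    |squareWaveSum n t - squareWaveSum m t| ≤ 2 / sin t / (2 * m + 1) := by
  have hb : Antitone fun i : ℕ => ((2 * i + 1 : ℝ))⁻¹ := fun i j hij => by
    dsimp only
    gcongr
  have h := abs_sum_Ico_mul_le_of_antitone hb (fun i => by positivity)
    (abs_sum_range_sin_odd_mul_le ht) hmn
  rw [squareWaveSum, squareWaveSum, ← sum_Ico_eq_sub _ hmn]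
  simp_rw [div_eq_inv_mul]
  convert h using 1
  ring

theorem cauchySeq_squareWaveSum {t : ℝ} (ht : 0 < sin t) :
    CauchySeq fun J => squareWaveSum J t := by
  refine cauchySeq_of_le_tendsto_0 _ (fun n m N hn hm => ?_)
    (tendsto_const_div_two_mul_add_one (4 / sin t))
  calc dist (squareWaveSum n t) (squareWaveSum m t)
      ≤ |squareWaveSum n t - squareWaveSum N t| + |squareWaveSum m t - squareWaveSum N t| :=
        dist_triangle_right _ _ _
    _ ≤ 2 / sin t / (2 * N + 1) + 2 / sin t / (2 * N + 1) :=
        add_le_add (abs_squareWaveSum_sub_le ht hn) (abs_squareWaveSum_sub_le ht hm)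
    _ = 4 / sin t / (2 * N + 1) := by ring

theorem tendsto_squareWaveSum {t : ℝ} (ht0 : 0 < t) (htπ : t < π) :
    Tendsto (fun J => squareWaveSum J t) atTop (𝓝 (π / 4)) := by
  obtain ⟨L, hL⟩ := cauchySeq_tendsto_of_complete
    (cauchySeq_squareWaveSum (sin_pos_of_pos_of_lt_pi ht0 htπ))
  have hpartial : Tendsto (fun N => ∑ n ∈ range N, if Odd n then sin (n * t) / n else 0)
      atTop (𝓝 L) := by
    simp_rw [sum_range_ite_odd (fun n : ℕ => sin (n * t) / n)]
    push_cast
    exact hL.comp (Nat.tendsto_div_const_atTop two_ne_zero)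
  have hseries : (fun r : ℝ => ∑' n : ℕ, (if Odd n then sin (n * t) / n else 0) * r ^ n) =ᶠ[𝓝[<] 1]
      fun r => (Complex.arg (1 + r * Complex.exp (t * Complex.I)) -
        Complex.arg (1 - r * Complex.exp (t * Complex.I))) / 2 := by
    filter_upwards [Ioo_mem_nhdsLT (show (-1 : ℝ) < 1 by norm_num)] with r hr
    exact (Complex.hasSum_ite_odd_sin_div_mul_pow t (abs_lt.2 hr)).tsum_eq
  have hL4 : L = π / 4 := tendsto_nhds_unique (tendsto_tsum_powerSeries_nhdsWithin_lt hpartial)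
    ((Complex.tendsto_arg_one_add_sub_arg_one_sub ht0 htπ).congr' hseries.symm)
  rwa [hL4] at hL

theorem abs_squareWaveSum_sub_pi_div_four_le {t : ℝ} (ht0 : 0 < t) (htπ : t < π) (J : ℕ) :
    |squareWaveSum J t - π / 4| ≤ 2 / sin t / (2 * J + 1) := by
  refine le_of_tendsto ((tendsto_const_nhds.sub (tendsto_squareWaveSum ht0 htπ)).abs) ?_
  filter_upwards [eventually_ge_atTop J] with N hN
  rw [abs_sub_comm]
  exact abs_squareWaveSum_sub_le (sin_pos_of_pos_of_lt_pi ht0 htπ) hN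

theorem abs_squareWaveSum_sub_sign_le {δ t : ℝ} (hδ : 0 < δ) (hδt : δ ≤ |t|) (ht : |t| ≤ π / 2)
    (J : ℕ) : |squareWaveSum J t - Real.sign t * (π / 4)| ≤ 2 / sin δ / (2 * J + 1) := by
  have habs : |squareWaveSum J |t| - π / 4| ≤ 2 / sin δ / (2 * J + 1) := by
    have hsinδ : 0 < sin δ := sin_pos_of_pos_of_lt_pi hδ (by linarith [pi_pos])
    have hsin : sin δ ≤ sin |t| := strictMonoOn_sin.monotoneOn
      ⟨by linarith [pi_pos], by linarith⟩ ⟨by linarith [pi_pos], ht⟩ hδt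
    calc _ ≤ 2 / sin |t| / (2 * J + 1) :=
          abs_squareWaveSum_sub_pi_div_four_le (hδ.trans_le hδt) (by linarith [pi_pos]) J
      _ ≤ 2 / sin δ / (2 * J + 1) := by gcongr
  rcases lt_or_gt_of_ne (abs_pos.1 (hδ.trans_le hδt)) with hneg | hpos
  · rw [abs_of_neg hneg, squareWaveSum_neg] at habs
    rw [Real.sign_of_neg hneg, ← abs_neg]
    convert habs using 2
    ring
  · rw [abs_of_pos hpos] at habs
    rwa [Real.sign_of_pos hpos, one_mul]

theorem abs_ite_mul_squareWaveSum_sub_sign_le (P : Prop) [Decidable P] {δ t : ℝ} (hδ : 0 < δ)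
    (hδπ : δ < π) (ht : P → δ ≤ |t| ∧ |t| ≤ π / 2) (J : ℕ) :
    |(if P then 1 else 0) * (squareWaveSum J t - Real.sign t * (π / 4))| ≤
      2 / sin δ / (2 * J + 1) := by
  split_ifs with hP
  · rw [one_mul]
    exact abs_squareWaveSum_sub_sign_le hδ (ht hP).1 (ht hP).2 J
  · rw [zero_mul, abs_zero]
    have := sin_pos_of_pos_of_lt_pi hδ hδπ
    positivity

theorem cfun_two_mul_add_one (j : ℕ) (x : ℝ) : cfun (2 * j + 1) x = cos ((2 * j + 1) * x) := by
  simp [cfun]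

theorem cfun_two_mul_add_two (j : ℕ) (x : ℝ) : cfun (2 * j + 2) x = sin ((2 * j + 1) * x) := by
  rw [cfun, if_neg (by omega), if_neg (by omega)]
  push_cast
  ring_nf

theorem gfun_two_mul_add_one (j : ℕ) (a b : ℝ) :
    gfun (2 * j + 1) a b = 2 / (π * (2 * j + 1)) *
      ((if b < 1 then 1 else 0) * sin ((2 * j + 1) * b) -
        (if 0 < a then 1 else 0) * sin ((2 * j + 1) * a)) := by
  simp [gfun]

theorem gfun_two_mul_add_two (j : ℕ) (a b : ℝ) :
    gfun (2 * j + 2) a b = 2 / (π * (2 * j + 1)) *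
      ((if 0 < a then 1 else 0) * cos ((2 * j + 1) * a) -
        (if b < 1 then 1 else 0) * cos ((2 * j + 1) * b)) := by
  rw [gfun, if_neg (by omega), if_neg (by omega)]
  push_cast
  ring_nf

theorem cfun_mul_gfun_add_cfun_mul_gfun (j : ℕ) (x a b : ℝ) :
    cfun (2 * j + 1) x * gfun (2 * j + 1) a b + cfun (2 * j + 2) x * gfun (2 * j + 2) a b =
      2 / π * ((if b < 1 then 1 else 0) * (sin ((2 * j + 1) * (b - x)) / (2 * j + 1)) -
        (if 0 < a then 1 else 0) * (sin ((2 * j + 1) * (a - x)) / (2 * j + 1))) := by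
  rw [cfun_two_mul_add_one, cfun_two_mul_add_two, gfun_two_mul_add_one, gfun_two_mul_add_two,
    mul_sub _ b x, mul_sub _ a x, sin_sub, sin_sub]
  field_simp
  ring

theorem oneJ_eq_gfun_zero_add_squareWaveSum (J : ℕ) (x a b : ℝ) :
    oneJ J x a b = gfun 0 a b + 2 / π *
      ((if b < 1 then 1 else 0) * squareWaveSum J (b - x) -
        (if 0 < a then 1 else 0) * squareWaveSum J (a - x)) := by
  induction J with
  | zero => simp [oneJ, squareWaveSum, cfun]
  | succ J ih =>
    rw [oneJ, show 2 * (J + 1) + 1 = 2 * J + 1 + 1 + 1 by ring, sum_range_succ, sum_range_succ,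
      ← oneJ, ih, add_assoc, cfun_mul_gfun_add_cfun_mul_gfun, squareWaveSum_succ,
      squareWaveSum_succ]
    ring

theorem indIoo_eq_gfun_zero_add_sign {a b x : ℝ} (hab : a < b) (hx0 : 0 < x) (hx1 : x < 1)
    (hxa : 0 < a → x ≠ a) (hxb : b < 1 → x ≠ b) :
    indIoo a b x = gfun 0 a b + 2 / π *
      ((if b < 1 then 1 else 0) * (Real.sign (b - x) * (π / 4)) -
        (if 0 < a then 1 else 0) * (Real.sign (a - x) * (π / 4))) := by
  have hxa' : x ≠ a := fun h => hxa (h ▸ hx0) h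
  have hxb' : x ≠ b := fun h => hxb (h ▸ hx1) h
  have hπ : π ≠ 0 := pi_ne_zero
  simp only [indIoo, gfun]
  rcases hxa'.lt_or_gt with ha | ha <;> rcases hxb'.lt_or_gt with hb | hb <;>
    simp only [Real.sign_of_pos, Real.sign_of_neg, sub_pos, sub_neg, ha, hb] <;>
    split_ifs <;> grind

theorem oneJ_tendstoUniformlyOn_general (a b δ : ℝ) (ha1 : a < 1) (hb : 0 < b)
    (hab : a < b) (hδ : 0 < δ) (hδ1 : δ < 1) :
    TendstoUniformlyOn (fun J x => oneJ J x a b) (fun x => indIoo a b x)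
      Filter.atTop (Uset δ a b) := by
  have hπ2 : 1 < π / 2 := by linarith [pi_gt_three]
  refine tendstoUniformlyOn_of_forall_dist_le (tendsto_const_div_two_mul_add_one (8 / π / sin δ)) ?_
  rintro J x ⟨⟨hx0, hx1⟩, hxa, hxb⟩
  have hfar {c : ℝ} (hc : x ∉ Set.Ioo (c - δ) (c + δ)) : δ ≤ |c - x| := by
    rwa [← Real.ball_eq_Ioo, Metric.mem_ball, not_lt, Real.dist_eq, abs_sub_comm] at hc
  have herr_a := abs_ite_mul_squareWaveSum_sub_sign_le (0 < a) hδ (by linarith)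
    (fun h => ⟨hfar (hxa h), abs_le.2 ⟨by linarith, by linarith⟩⟩) J
  have herr_b := abs_ite_mul_squareWaveSum_sub_sign_le (b < 1) hδ (by linarith)
    (fun h => ⟨hfar (hxb h), abs_le.2 ⟨by linarith, by linarith⟩⟩) J
  have hxa' : 0 < a → x ≠ a := fun h he => hxa h ⟨by linarith, by linarith⟩
  have hxb' : b < 1 → x ≠ b := fun h he => hxb h ⟨by linarith, by linarith⟩
  calc dist (indIoo a b x) (oneJ J x a b)
      = |2 / π * ((if 0 < a then 1 else 0) *
            (squareWaveSum J (a - x) - Real.sign (a - x) * (π / 4)) -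
          (if b < 1 then 1 else 0) *
            (squareWaveSum J (b - x) - Real.sign (b - x) * (π / 4)))| := by
        rw [Real.dist_eq, indIoo_eq_gfun_zero_add_sign hab hx0 hx1 hxa' hxb',
          oneJ_eq_gfun_zero_add_squareWaveSum]
        ring_nf
    _ ≤ 2 / π * (2 / sin δ / (2 * J + 1) + 2 / sin δ / (2 * J + 1)) := by
        rw [abs_mul, abs_of_pos (by positivity)]
        gcongr
        exact (abs_sub _ _).trans (add_le_add herr_a herr_b)
    _ = 8 / π / sin δ / (2 * J + 1) := by ring

/-- the partial sums 1_J(·,a,b) converge uniformly to 𝟙(a<·<b) on U_{δ,(a,b)}. -/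
theorem oneJ_tendstoUniformlyOn (a b δ : ℝ) (ha : 0 ≤ a) (ha1 : a < 1) (hb : 0 < b) (hb1 : b ≤ 1)
    (hab : a < b) (hδ : 0 < δ) (hδ1 : δ < 1) :
    TendstoUniformlyOn (fun J x => oneJ J x a b) (fun x => indIoo a b x)
      Filter.atTop (Uset δ a b) :=
  oneJ_tendstoUniformlyOn_general a b δ ha1 hb hab hδ hδ1
end

section
/- Let p ∈ ℕ⁺ and let P be a probability measure on the Borel σ-algebra of the open cube (0,1)^p that is absolutely continuous with respect to p-dimensional Lebesgue measure. Fix a ∈ [0,1)^p and b ∈ (0,1]^p with a_l < b_l for each l. Define the error e_J(x,a,b) = 𝟙(a < x < b) − 1_J(x,a,b) for x ∈ (0,1)^p. Then the expectation of the error under P tends to zero: lim_{J→∞} ∫ e_J(x,a,b) dP(x) = 0. -/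
/-- p-dimensional partial sum: 1_J(x,a,b) = ∏_{l} 1_J(x_l,a_l,b_l). -/
noncomputable def oneJp {p : ℕ} (J : ℕ) (x a b : Fin p → ℝ) : ℝ :=
  ∏ l, oneJ J (x l) (a l) (b l)

/-- p-dimensional indicator: 𝟙(a<x<b) = ∏_l 𝟙(a_l<x_l<b_l). -/
noncomputable def indBox {p : ℕ} (a b x : Fin p → ℝ) : ℝ :=
  ∏ l, indIoo (a l) (b l) (x l)

open Real Filter Finset Topology MeasureTheory

noncomputable def oddSinSum (J : ℕ) (t : ℝ) : ℝ :=
  ∑ j ∈ range J, sin ((2 * j + 1) * t) / (2 * j + 1)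

lemma oddSinSum_neg (J : ℕ) (t : ℝ) : oddSinSum J (-t) = -oddSinSum J t := by
  simp [oddSinSum, neg_div, sum_neg_distrib]

lemma two_sin_mul_sum_cos_odd (J : ℕ) (s : ℝ) :
    2 * sin s * ∑ j ∈ range J, cos ((2 * j + 1) * s) = sin (2 * J * s) := by
  induction J with
  | zero => simp
  | succ n ih =>
    rw [sum_range_succ, mul_add, ih, two_mul_sin_mul_cos,
      show s - (2 * n + 1) * s = -(2 * n * s) by ring, sin_neg]
    push_cast
    ring_nf

lemma two_sin_mul_sum_sin_odd (M : ℕ) (t : ℝ) :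
    2 * sin t * ∑ k ∈ range M, sin ((2 * k + 1) * t) = 1 - cos (2 * M * t) := by
  induction M with
  | zero => simp
  | succ n ih =>
    rw [sum_range_succ, mul_add, ih, two_mul_sin_mul_sin,
      show t - (2 * n + 1) * t = -(2 * n * t) by ring, cos_neg]
    push_cast
    ring_nf

lemma abs_sum_sin_odd_le (N m : ℕ) {t : ℝ} (ht : 0 < sin t) :
    |∑ k ∈ range m, sin ((2 * ((N + k : ℕ) : ℝ) + 1) * t)| ≤ 1 / sin t := by
  have h2 : 2 * sin t * ∑ k ∈ range m, sin ((2 * ((N + k : ℕ) : ℝ) + 1) * t)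
      = cos (2 * N * t) - cos (2 * (N + m : ℕ) * t) := by
    have := sum_range_add (fun k : ℕ => sin ((2 * (k : ℝ) + 1) * t)) N m
    rw [eq_sub_of_add_eq' this.symm, mul_sub, two_sin_mul_sum_sin_odd, two_sin_mul_sum_sin_odd]
    ring
  have h2' : |2 * sin t * ∑ k ∈ range m, sin ((2 * ((N + k : ℕ) : ℝ) + 1) * t)| ≤ 2 := by
    rw [h2]
    exact (abs_sub _ _).trans
      (by linarith [abs_cos_le_one (2 * N * t), abs_cos_le_one (2 * (N + m : ℕ) * t)])
  rw [le_div_iff₀ ht, ← abs_of_pos ht, ← abs_mul, mul_comm]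
  rw [mul_assoc, abs_mul, abs_two] at h2'
  linarith

lemma abs_sum_mul_le_of_antitone {f g : ℕ → ℝ} {B : ℝ} (hf : Antitone f) (hf0 : ∀ k, 0 ≤ f k)
    (hg : ∀ m, |∑ i ∈ range m, g i| ≤ B) (n : ℕ) :
    |∑ i ∈ range n, f i * g i| ≤ f 0 * B := by
  have hdiff : ∀ i, |(f (i + 1) - f i) * ∑ j ∈ range (i + 1), g j| ≤ (f i - f (i + 1)) * B := by
    intro i
    rw [abs_mul, abs_sub_comm, abs_of_nonneg (sub_nonneg.2 (hf i.le_succ))]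
    exact mul_le_mul_of_nonneg_left (hg _) (sub_nonneg.2 (hf i.le_succ))
  have := sum_range_by_parts f g n
  simp only [smul_eq_mul] at this
  rw [this]
  calc _ ≤ |f (n - 1) * ∑ i ∈ range n, g i|
        + |∑ i ∈ range (n - 1), (f (i + 1) - f i) * ∑ j ∈ range (i + 1), g j| := abs_sub _ _
    _ ≤ f (n - 1) * B + ∑ i ∈ range (n - 1), (f i - f (i + 1)) * B := by
        gcongr
        · rw [abs_mul, abs_of_nonneg (hf0 _)]
          exact mul_le_mul_of_nonneg_left (hg n) (hf0 _)
        · exact (abs_sum_le_sum_abs _ _).trans (sum_le_sum fun i _ => hdiff i)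
    _ = f 0 * B := by rw [← sum_mul, sum_range_sub' f]; ring

lemma abs_oddSinSum_le_mul (J : ℕ) {t : ℝ} (ht : 0 ≤ t) : |oddSinSum J t| ≤ J * t := by
  calc |oddSinSum J t| ≤ ∑ j ∈ range J, |sin ((2 * j + 1) * t) / (2 * j + 1)| :=
        abs_sum_le_sum_abs _ _
    _ ≤ ∑ _j ∈ range J, t := sum_le_sum fun j _ => by
        have hj : (0 : ℝ) < 2 * j + 1 := by positivity
        rw [abs_div, abs_of_pos hj, div_le_iff₀ hj]
        calc |sin ((2 * j + 1) * t)| ≤ |(2 * j + 1) * t| := abs_sin_le_abs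
          _ = t * (2 * j + 1) := by rw [abs_of_nonneg (by positivity)]; ring
    _ = J * t := by simp

lemma oddSinSum_add (N n : ℕ) (t : ℝ) :
    oddSinSum (N + n) t = oddSinSum N t +
      ∑ k ∈ range n, (2 * ((N + k : ℕ) : ℝ) + 1)⁻¹ * sin ((2 * ((N + k : ℕ) : ℝ) + 1) * t) := by
  simp only [oddSinSum, sum_range_add, div_eq_inv_mul]

lemma abs_oddSinSum_le_of_pos (J : ℕ) {t : ℝ} (ht0 : 0 < t) (ht : t ≤ π / 2) :
    |oddSinSum J t| ≤ 2 + t := by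
  obtain ⟨N, hN1, hN2⟩ : ∃ N : ℕ, 1 ≤ N * t ∧ N * t ≤ 1 + t := by
    refine ⟨⌈1 / t⌉₊, (div_le_iff₀ ht0).1 (Nat.le_ceil _), ?_⟩
    calc (⌈1 / t⌉₊ : ℝ) * t ≤ (1 / t + 1) * t := by
          gcongr; exact (Nat.ceil_lt_add_one (by positivity)).le
      _ = 1 + t := by field_simp
  rcases le_total J N with hJN | hNJ
  · calc |oddSinSum J t| ≤ J * t := abs_oddSinSum_le_mul J ht0.le
      _ ≤ N * t := by gcongr
      _ ≤ 2 + t := by linarith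
  obtain ⟨n, rfl⟩ := Nat.exists_eq_add_of_le hNJ
  have hsin : 0 < sin t := sin_pos_of_pos_of_lt_pi ht0 (by linarith [pi_pos])
  have hf : Antitone fun k : ℕ => (2 * ((N + k : ℕ) : ℝ) + 1)⁻¹ := fun i j hij => by
    dsimp only
    gcongr
  -- Jordan's inequality `sin t ≥ 2t/π` together with `N t ≥ 1` and `π ≤ 4`.
  have hf0 : (2 * ((N + 0 : ℕ) : ℝ) + 1)⁻¹ ≤ sin t := by
    rw [inv_le_iff_one_le_mul₀ (by positivity)]
    have hjordan := mul_le_sin ht0.le ht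
    have h4 : 1 ≤ 2 / π * 2 := by
      rw [div_mul_eq_mul_div, le_div_iff₀ pi_pos]; linarith [pi_le_four]
    have : 2 / π * 2 ≤ 2 / π * t * (2 * N + 1) := by
      rw [mul_assoc]; gcongr; nlinarith
    push_cast
    nlinarith
  have htail := abs_sum_mul_le_of_antitone hf (fun k => by positivity)
    (fun m => abs_sum_sin_odd_le N m hsin) n
  rw [oddSinSum_add]
  calc _ ≤ |oddSinSum N t| + _ := abs_add_le _ _
    _ ≤ N * t + (2 * ((N + 0 : ℕ) : ℝ) + 1)⁻¹ * (1 / sin t) :=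
        add_le_add (abs_oddSinSum_le_mul N ht0.le) htail
    _ ≤ (1 + t) + 1 := by
        gcongr
        rw [mul_one_div, div_le_one hsin]; exact hf0
    _ = 2 + t := by ring

lemma abs_oddSinSum_le (J : ℕ) {t : ℝ} (ht : |t| ≤ π / 2) : |oddSinSum J t| ≤ 2 + |t| := by
  rcases lt_trichotomy t 0 with h | rfl | h
  · rw [abs_of_neg h] at ht ⊢
    simpa [oddSinSum_neg] using abs_oddSinSum_le_of_pos J (neg_pos.2 h) ht
  · simp [oddSinSum]
  · rw [abs_of_pos h] at ht ⊢
    exact abs_oddSinSum_le_of_pos J h ht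

lemma tendsto_integral_mul_sin_atTop {u u' : ℝ → ℝ} {α β : ℝ}
    (hu : ∀ s ∈ Set.uIcc α β, HasDerivAt u (u' s) s) (hu' : ContinuousOn u' (Set.uIcc α β)) :
    Tendsto (fun ω : ℝ => ∫ s in α..β, u s * sin (ω * s)) atTop (𝓝 0) := by
  obtain ⟨M, hM⟩ := isCompact_uIcc.exists_bound_of_continuousOn hu'
  have hbound : ∀ ω : ℝ, 0 < ω →
      ‖∫ s in α..β, u s * sin (ω * s)‖ ≤ (|u β| + |u α| + M * |β - α|) / ω := by
    intro ω hω
    have hv : ∀ s ∈ Set.uIcc α β, HasDerivAt (fun s => -cos (ω * s) / ω) (sin (ω * s)) s := by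
      intro s _
      have := ((hasDerivAt_id s).const_mul ω).cos.neg.div_const ω
      simp only [id, mul_one, neg_mul, neg_neg] at this
      rwa [mul_div_cancel_right₀ _ hω.ne'] at this
    have hv_le : ∀ s, |-cos (ω * s) / ω| ≤ 1 / ω := fun s => by
      rw [abs_div, abs_neg, abs_of_pos hω]; gcongr; exact abs_cos_le_one _
    have hint : ‖∫ s in α..β, u' s * (-cos (ω * s) / ω)‖ ≤ M * (1 / ω) * |β - α| := by
      refine intervalIntegral.norm_integral_le_of_norm_le_const fun s hs => ?_
      rw [norm_mul]
      exact mul_le_mul (hM s (Set.uIoc_subset_uIcc hs)) (hv_le s) (norm_nonneg _)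
        ((norm_nonneg _).trans (hM s (Set.uIoc_subset_uIcc hs)))
    have hv' : IntervalIntegrable (fun s => sin (ω * s)) volume α β :=
      (by fun_prop : Continuous fun s => sin (ω * s)).intervalIntegrable _ _
    rw [intervalIntegral.integral_mul_deriv_eq_deriv_mul hu hv hu'.intervalIntegrable hv',
      Real.norm_eq_abs]
    rw [Real.norm_eq_abs] at hint
    have hβ : |u β * (-cos (ω * β) / ω)| ≤ |u β| * (1 / ω) := by
      rw [abs_mul]; gcongr; exact hv_le β
    have hα : |u α * (-cos (ω * α) / ω)| ≤ |u α| * (1 / ω) := by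
      rw [abs_mul]; gcongr; exact hv_le α
    calc _ ≤ |u β * (-cos (ω * β) / ω)| + |u α * (-cos (ω * α) / ω)|
          + |∫ s in α..β, u' s * (-cos (ω * s) / ω)| :=
          (abs_sub _ _).trans (add_le_add_left (abs_sub _ _) _)
      _ ≤ |u β| * (1 / ω) + |u α| * (1 / ω) + M * (1 / ω) * |β - α| := by gcongr
      _ = _ := by ring
  exact squeeze_zero_norm' ((eventually_gt_atTop 0).mono hbound)
    (tendsto_const_nhds.div_atTop tendsto_id)

lemma oddSinSum_pi_div_two (J : ℕ) :
    oddSinSum J (π / 2) = ∑ j ∈ range J, (-1 : ℝ) ^ j / (2 * j + 1) := by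
  refine sum_congr rfl fun j _ => ?_
  rw [show (2 * (j : ℝ) + 1) * (π / 2) = j * π + π / 2 by ring, sin_add_pi_div_two,
    cos_nat_mul_pi]

lemma hasDerivAt_oddSinSum (J : ℕ) (s : ℝ) :
    HasDerivAt (oddSinSum J) (∑ j ∈ range J, cos ((2 * j + 1) * s)) s := by
  unfold oddSinSum
  refine HasDerivAt.fun_sum fun j _ => ?_
  have := ((hasDerivAt_id s).const_mul (2 * (j : ℝ) + 1)).sin.div_const (2 * (j : ℝ) + 1)
  simp only [id, mul_one] at this
  rwa [mul_div_cancel_right₀ _ (by positivity)] at this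

lemma tendsto_oddSinSum_of_pos {t : ℝ} (ht0 : 0 < t) (ht : t < π) :
    Tendsto (fun J => oddSinSum J t) atTop (𝓝 (π / 4)) := by
  have hsin : ∀ s ∈ Set.uIcc (π / 2) t, 0 < sin s := fun s hs => by
    rcases Set.mem_uIcc.1 hs with h | h <;>
      exact sin_pos_of_pos_of_lt_pi (by linarith [pi_pos]) (by linarith [pi_pos])
  -- The Dirichlet kernel of the odd cosines is `sin (2 J s) / (2 sin s)`.
  have hrep : ∀ J : ℕ, oddSinSum J t =
      oddSinSum J (π / 2) + ∫ s in π / 2..t, (2 * sin s)⁻¹ * sin (2 * J * s) := by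
    intro J
    have hcos : Continuous fun s : ℝ => ∑ j ∈ range J, cos ((2 * j + 1) * s) := by fun_prop
    have hFTC := intervalIntegral.integral_eq_sub_of_hasDerivAt
      (fun s _ => hasDerivAt_oddSinSum J s) (hcos.intervalIntegrable (π / 2) t)
    rw [intervalIntegral.integral_congr (g := fun s => (2 * sin s)⁻¹ * sin (2 * J * s))
      fun s hs => by
        dsimp only
        rw [← two_sin_mul_sum_cos_odd, ← mul_assoc,
          inv_mul_cancel₀ (by linarith [hsin s hs]), one_mul]]
      at hFTC
    linarith
  have hderiv : ∀ s ∈ Set.uIcc (π / 2) t,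
      HasDerivAt (fun s => (2 * sin s)⁻¹) (-(2 * cos s) / (2 * sin s) ^ 2) s :=
    fun s hs => ((hasDerivAt_sin s).const_mul 2).inv (by linarith [hsin s hs])
  have hcont : ContinuousOn (fun s => -(2 * cos s) / (2 * sin s) ^ 2) (Set.uIcc (π / 2) t) :=
    ContinuousOn.div (by fun_prop) (by fun_prop) fun s hs => by
      have := hsin s hs; positivity
  have hfreq : Tendsto (fun J : ℕ => 2 * (J : ℝ)) atTop atTop :=
    tendsto_natCast_atTop_atTop.const_mul_atTop two_pos
  have hlim :=
    tendsto_sum_pi_div_four.add ((tendsto_integral_mul_sin_atTop hderiv hcont).comp hfreq)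
  rw [add_zero] at hlim
  exact hlim.congr fun J => by simp [hrep, oddSinSum_pi_div_two]

lemma tendsto_oddSinSum {t : ℝ} (ht0 : t ≠ 0) (ht : |t| < π) :
    Tendsto (fun J => oddSinSum J t) atTop (𝓝 (π / 4 * Real.sign t)) := by
  rcases ht0.lt_or_gt with h | h
  · rw [abs_of_neg h] at ht
    rw [Real.sign_of_neg h, mul_neg_one]
    simpa [oddSinSum_neg] using (tendsto_oddSinSum_of_pos (neg_pos.2 h) ht).neg
  · rw [abs_of_pos h] at ht
    rw [Real.sign_of_pos h, mul_one]
    exact tendsto_oddSinSum_of_pos h ht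

lemma cfun_mul_gfun_add (n : ℕ) (x a b : ℝ) :
    cfun (2 * n + 1) x * gfun (2 * n + 1) a b + cfun (2 * n + 2) x * gfun (2 * n + 2) a b =
      2 / π * ((if b < 1 then (1 : ℝ) else 0) * (sin ((2 * n + 1) * (b - x)) / (2 * n + 1)) +
        (if 0 < a then (1 : ℝ) else 0) * (sin ((2 * n + 1) * (x - a)) / (2 * n + 1))) := by
  have hodd : (2 * n + 1) % 2 = 1 := by omega
  have heven : (2 * n + 2) % 2 ≠ 1 := by omega
  simp only [cfun, gfun, hodd, heven, if_true, if_false, Nat.add_eq_zero_iff, one_ne_zero,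
    two_ne_zero, and_false]
  push_cast
  rw [show (2 * (n : ℝ) + 2 - 1) = 2 * n + 1 by ring, mul_sub (2 * (n : ℝ) + 1) b x,
    mul_sub (2 * (n : ℝ) + 1) x a, sin_sub, sin_sub]
  have : (2 * (n : ℝ) + 1) ≠ 0 := by positivity
  field_simp
  ring

lemma oneJ_eq (J : ℕ) (x a b : ℝ) :
    oneJ J x a b = gfun 0 a b + 2 / π * ((if b < 1 then (1 : ℝ) else 0) * oddSinSum J (b - x) +
      (if 0 < a then (1 : ℝ) else 0) * oddSinSum J (x - a)) := by
  induction J with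
  | zero => simp [oneJ, oddSinSum, cfun]
  | succ n ih =>
    rw [oneJ, show 2 * (n + 1) + 1 = 2 * n + 1 + 1 + 1 by ring, sum_range_succ, sum_range_succ,
      ← oneJ, ih, add_assoc, cfun_mul_gfun_add]
    simp only [oddSinSum, sum_range_succ]
    ring

lemma gfun_zero_mem_Icc (a b : ℝ) : gfun 0 a b ∈ Set.Icc 0 1 := by
  rw [gfun, if_pos rfl]
  constructor <;> split_ifs <;> norm_num

lemma abs_oneJ_le (J : ℕ) {x a b : ℝ} (hx : x ∈ Set.Icc (0 : ℝ) 1) (ha : a ∈ Set.Icc (0 : ℝ) 1)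
    (hb : b ∈ Set.Icc (0 : ℝ) 1) : |oneJ J x a b| ≤ 7 := by
  have hS : ∀ t : ℝ, |t| ≤ 1 → |oddSinSum J t| ≤ 3 := fun t ht =>
    (abs_oddSinSum_le J (ht.trans (by linarith [pi_gt_three] : (1 : ℝ) ≤ π / 2))).trans
      (by linarith)
  have hbx := hS (b - x) (abs_sub_le_iff.2 ⟨by linarith [hb.2, hx.1], by linarith [hb.1, hx.2]⟩)
  have hxa := hS (x - a) (abs_sub_le_iff.2 ⟨by linarith [ha.1, hx.2], by linarith [ha.2, hx.1]⟩)
  have hind : ∀ P : Prop, [Decidable P] → |if P then (1 : ℝ) else 0| ≤ 1 := fun P _ => by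
    split_ifs <;> norm_num
  have h2pi : |2 / π| ≤ 1 := by
    rw [abs_of_pos (by positivity), div_le_one pi_pos]; linarith [pi_gt_three]
  have hg := gfun_zero_mem_Icc a b
  rw [oneJ_eq]
  calc _ ≤ |gfun 0 a b| + |2 / π| * (|(if b < 1 then (1 : ℝ) else 0) * oddSinSum J (b - x)| +
        |(if 0 < a then (1 : ℝ) else 0) * oddSinSum J (x - a)|) := by
        refine (abs_add_le _ _).trans ?_
        rw [abs_mul]
        gcongr
        exact abs_add_le _ _
    _ ≤ 1 + 1 * (1 * 3 + 1 * 3) := by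
        rw [abs_of_nonneg hg.1, abs_mul, abs_mul]
        gcongr
        exacts [hg.2, hind _, hind _]
    _ = 7 := by norm_num

lemma tendsto_oneJ {x a b : ℝ} (hx : x ∈ Set.Icc (0 : ℝ) 1) (ha : a ∈ Set.Icc (0 : ℝ) 1)
    (hb : b ∈ Set.Icc (0 : ℝ) 1) (hab : a < b) (hxa : x ≠ a) (hxb : x ≠ b) :
    Tendsto (fun J => oneJ J x a b) atTop (𝓝 (indIoo a b x)) := by
  have hS : ∀ t : ℝ, t ≠ 0 → |t| ≤ 1 →
      Tendsto (fun J => oddSinSum J t) atTop (𝓝 (π / 4 * Real.sign t)) := fun t h0 ht =>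
    tendsto_oddSinSum h0 (ht.trans_lt (by linarith [pi_gt_three] : (1 : ℝ) < π))
  have hbx := hS (b - x) (sub_ne_zero.2 hxb.symm)
    (abs_sub_le_iff.2 ⟨by linarith [hb.2, hx.1], by linarith [hb.1, hx.2]⟩)
  have hxa' := hS (x - a) (sub_ne_zero.2 hxa)
    (abs_sub_le_iff.2 ⟨by linarith [ha.1, hx.2], by linarith [ha.2, hx.1]⟩)
  have hlim := tendsto_const_nhds (x := gfun 0 a b) |>.add
    (((hbx.const_mul (if b < 1 then (1 : ℝ) else 0)).add
      (hxa'.const_mul (if 0 < a then (1 : ℝ) else 0))).const_mul (2 / π))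
  simp only [← oneJ_eq] at hlim
  convert hlim using 2
  have hpi : π ≠ 0 := pi_ne_zero
  rw [gfun, if_pos rfl, indIoo]
  rcases hxa.lt_or_gt with hxa | hxa
  · rw [if_neg (by intro h; linarith [h.1]), if_pos (by linarith [hx.1] : 0 < a),
      Real.sign_of_pos (by linarith : 0 < b - x), Real.sign_of_neg (by linarith : x - a < 0)]
    split_ifs <;> field_simp <;> ring
  rcases hxb.lt_or_gt with hxb | hxb
  · rw [if_pos ⟨hxa, hxb⟩, Real.sign_of_pos (by linarith : 0 < b - x),
      Real.sign_of_pos (by linarith : 0 < x - a)]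
    split_ifs <;> field_simp <;> ring
  · rw [if_neg (by intro h; linarith [h.2]), if_pos (by linarith [hx.2] : b < 1),
      Real.sign_of_neg (by linarith : b - x < 0), Real.sign_of_pos (by linarith : 0 < x - a)]
    split_ifs <;> field_simp <;> ring

lemma continuous_cfun (j : ℕ) : Continuous (cfun j) := by
  unfold cfun
  split_ifs <;> fun_prop

section Box

variable {p : ℕ} {x a b : Fin p → ℝ}

lemma abs_oneJp_le (J : ℕ) (hx : ∀ l, x l ∈ Set.Icc (0 : ℝ) 1) (ha : ∀ l, a l ∈ Set.Icc (0 : ℝ) 1)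
    (hb : ∀ l, b l ∈ Set.Icc (0 : ℝ) 1) : |oneJp J x a b| ≤ 7 ^ p := by
  rw [oneJp, abs_prod]
  calc ∏ l, |oneJ J (x l) (a l) (b l)| ≤ ∏ _l : Fin p, (7 : ℝ) :=
        prod_le_prod (fun l _ => abs_nonneg _) fun l _ => abs_oneJ_le J (hx l) (ha l) (hb l)
    _ = 7 ^ p := by simp

lemma tendsto_oneJp (hx : ∀ l, x l ∈ Set.Icc (0 : ℝ) 1) (ha : ∀ l, a l ∈ Set.Icc (0 : ℝ) 1)
    (hb : ∀ l, b l ∈ Set.Icc (0 : ℝ) 1) (hab : ∀ l, a l < b l) (hxa : ∀ l, x l ≠ a l)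
    (hxb : ∀ l, x l ≠ b l) :
    Tendsto (fun J => oneJp J x a b) atTop (𝓝 (indBox a b x)) :=
  tendsto_finsetProd _ fun l _ => tendsto_oneJ (hx l) (ha l) (hb l) (hab l) (hxa l) (hxb l)

lemma abs_indBox_le (a b x : Fin p → ℝ) : |indBox a b x| ≤ 1 := by
  rw [indBox, abs_prod]
  exact prod_le_one (fun _ _ => abs_nonneg _) fun l _ => by
    rw [indIoo]; split_ifs <;> norm_num

lemma measurable_indBox (a b : Fin p → ℝ) : Measurable (indBox a b) :=
  Finset.measurable_prod _ fun l _ =>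
    Measurable.ite ((measurable_pi_apply l) measurableSet_Ioo) measurable_const measurable_const

lemma continuous_oneJp (J : ℕ) (a b : Fin p → ℝ) : Continuous fun x => oneJp J x a b :=
  continuous_finsetProd _ fun l _ => continuous_finsetSum _ fun j _ =>
    ((continuous_cfun j).comp (continuous_apply l)).mul continuous_const

end Box

lemma ae_ne_of_absolutelyContinuous {ι : Type*} [Fintype ι] {P : Measure (ι → ℝ)}
    (hac : P ≪ volume) (c : ι → ℝ) : ∀ᵐ x ∂P, ∀ l, x l ≠ c l :=
  ae_all_iff.2 fun l => hac.ae_le <| ae_iff.2 <| by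
    simpa [volume_pi] using Measure.pi_hyperplane (fun _ : ι => (volume : Measure ℝ)) l (c l)

theorem expected_error_tendsto_zero_general (p : ℕ)
    (P : Measure (Fin p → ℝ)) [IsProbabilityMeasure P]
    (hac : P ≪ volume)
    (hsupp : P {x : Fin p → ℝ | ∀ l, x l ∈ Set.Ioo (0 : ℝ) 1} = 1)
    (a b : Fin p → ℝ)
    (ha : ∀ l, a l ∈ Set.Ico (0 : ℝ) 1) (hb : ∀ l, b l ∈ Set.Ioc (0 : ℝ) 1)
    (hab : ∀ l, a l < b l) :
    Filter.Tendsto (fun J : ℕ => ∫ x, (indBox a b x - oneJp J x a b) ∂P)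
      Filter.atTop (nhds 0) := by
  have ha' : ∀ l, a l ∈ Set.Icc (0 : ℝ) 1 := fun l => Set.Ico_subset_Icc_self (ha l)
  have hb' : ∀ l, b l ∈ Set.Icc (0 : ℝ) 1 := fun l => Set.Ioc_subset_Icc_self (hb l)
  have hcube : ∀ᵐ x ∂P, ∀ l, x l ∈ Set.Icc (0 : ℝ) 1 := by
    have hmeas : MeasurableSet {x : Fin p → ℝ | ∀ l, x l ∈ Set.Ioo (0 : ℝ) 1} := by
      measurability
    filter_upwards [(ae_iff_measure_eq hmeas.nullMeasurableSet).2 (by rw [hsupp, measure_univ])]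
      with x hx l using Set.Ioo_subset_Icc_self (hx l)
  have hlim : ∀ᵐ x ∂P, Tendsto (fun J => indBox a b x - oneJp J x a b) atTop (𝓝 0) := by
    filter_upwards [hcube, ae_ne_of_absolutelyContinuous hac a,
      ae_ne_of_absolutelyContinuous hac b] with x hx hxa hxb
    simpa using (tendsto_oneJp hx ha' hb' hab hxa hxb).const_sub (indBox a b x)
  have hbound : ∀ J, ∀ᵐ x ∂P, ‖indBox a b x - oneJp J x a b‖ ≤ 1 + 7 ^ p := fun J => by
    filter_upwards [hcube] with x hx
    exact (abs_sub _ _).trans (add_le_add (abs_indBox_le a b x) (abs_oneJp_le J hx ha' hb'))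
  simpa using tendsto_integral_of_dominated_convergence (fun _ => 1 + 7 ^ p)
    (fun J =>
      ((measurable_indBox a b).sub (continuous_oneJp J a b).measurable).aestronglyMeasurable)
    (integrable_const _) hbound hlim

/-- if P is a probability measure on (0,1)^p absolutely continuous w.r.t.
Lebesgue measure, then the expected approximation error e_J = 𝟙(a<·<b) − 1_J(·,a,b)
tends to 0 as J → ∞. -/
theorem expected_error_tendsto_zero (p : ℕ) (hp : 0 < p)
    (P : Measure (Fin p → ℝ)) [IsProbabilityMeasure P]
    (hac : P ≪ volume)
    (hsupp : P {x : Fin p → ℝ | ∀ l, x l ∈ Set.Ioo (0 : ℝ) 1} = 1)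
    (a b : Fin p → ℝ)
    (ha : ∀ l, a l ∈ Set.Ico (0 : ℝ) 1) (hb : ∀ l, b l ∈ Set.Ioc (0 : ℝ) 1)
    (hab : ∀ l, a l < b l) :
    Filter.Tendsto (fun J : ℕ => ∫ x, (indBox a b x - oneJp J x a b) ∂P)
      Filter.atTop (nhds 0) :=
  expected_error_tendsto_zero_general p P hac hsupp a b ha hb hab
end
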